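/- Let S be a commutative ring, x ∈ S a non-zerodivisor, R = S/(x), and let θ = (f, g) : (F₁,G₁,φ₁,ψ₁) → (F₂,G₂,φ₂,ψ₂) be a morphism of matrix factorizations of x. If the induced chain map of 2-periodic complexes of R-modules (with components f̄ and ḡ) is nullhomotopic as a chain map, then θ is nullhomotopic as a morphism of matrix factorizations over S. -/
import Mathlib


/-- The submodule `xM` of an `S`-module `M`. -/
def xSub {S : Type*} [CommRing S] (x : S) (M : Type*) [AddCommGroup M] [Module S M] :
    Submodule S M :=
  Ideal.span {x} • (⊤ : Submodule S M)

/-- The map induced by an `S`-linear map `f : M → N` on the reductions `M/xM → N/xN`;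
these reductions are modules over `R = S/(x)`. -/
def redMap {S : Type*} [CommRing S] (x : S) {M N : Type*} [AddCommGroup M] [Module S M]
    [AddCommGroup N] [Module S N] (f : M →ₗ[S] N) :
    (M ⧸ xSub x M) →ₗ[S] (N ⧸ xSub x N) :=
  Submodule.mapQ _ _ f (by
    rw [← Submodule.map_le_iff_le_comap, xSub, xSub, Submodule.map_smul'']
    exact Submodule.smul_mono le_rfl le_top)

/-- In a free module, scalar multiplication by a non-zerodivisor is injective. -/
lemma smul_cancel_of_free {S M : Type*} [CommRing S] [AddCommGroup M] [Module S M]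
    [Module.Free S M] {x : S} (hx : x ∈ nonZeroDivisors S) {m m' : M}
    (h : x • m = x • m') : m = m' := by
  let b := Module.Free.chooseBasis S M
  apply b.repr.injective
  ext i
  have h2 := congrArg (fun z => b.repr z i) h
  simp only [map_smul, Finsupp.smul_apply, smul_eq_mul] at h2
  exact (mul_cancel_left_mem_nonZeroDivisors hx).mp h2

/-- Membership in `xM`. -/
lemma mem_xSub_iff {S M : Type*} [CommRing S] [AddCommGroup M] [Module S M] (x : S) (m : M) :
    m ∈ xSub x M ↔ ∃ n, x • n = m := by
  rw [xSub]
  constructor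
  · intro h
    refine Submodule.smul_induction_on h ?_ ?_
    · rintro r hr n -
      obtain ⟨c, rfl⟩ := Ideal.mem_span_singleton'.mp hr
      exact ⟨c • n, by rw [smul_smul, mul_comm]⟩
    · rintro a b ⟨na, rfl⟩ ⟨nb, rfl⟩
      exact ⟨na + nb, by rw [smul_add]⟩
  · rintro ⟨n, rfl⟩
    exact Submodule.smul_mem_smul (Ideal.mem_span_singleton_self x) trivial

/-- faithfulness of the reduction functor: let θ = (f,g) be a morphism of
matrix factorizations of a non-zerodivisor x ∈ S.  If the induced chain map of 2-periodic
complexes of R = S/(x)-modules is nullhomotopic — witnessed by a (not necessarily periodic)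
chain homotopy, i.e. for each degree n ∈ ℤ maps sₙ : G₁/x → F₂/x and tₙ : F₁/x → G₂/x with
f̄ = sₙ∘φ̄₁ + ψ̄₂∘tₙ and ḡ = tₙ∘ψ̄₁ + φ̄₂∘sₙ₊₁ — then θ is nullhomotopic as a morphism
of matrix factorizations over S. -/
theorem mf_reduction_faithful {S : Type*} [CommRing S] (x : S)
    (hx : x ∈ nonZeroDivisors S)
    (F₁ G₁ F₂ G₂ : Type*) [AddCommGroup F₁] [Module S F₁] [AddCommGroup G₁] [Module S G₁]
    [AddCommGroup F₂] [Module S F₂] [AddCommGroup G₂] [Module S G₂]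
    [Module.Free S F₁] [Module.Finite S F₁] [Module.Free S G₁] [Module.Finite S G₁]
    [Module.Free S F₂] [Module.Finite S F₂] [Module.Free S G₂] [Module.Finite S G₂]
    (φ₁ : F₁ →ₗ[S] G₁) (ψ₁ : G₁ →ₗ[S] F₁) (φ₂ : F₂ →ₗ[S] G₂) (ψ₂ : G₂ →ₗ[S] F₂)
    (hψφ₁ : ψ₁ ∘ₗ φ₁ = x • LinearMap.id) (hφψ₁ : φ₁ ∘ₗ ψ₁ = x • LinearMap.id)
    (hψφ₂ : ψ₂ ∘ₗ φ₂ = x • LinearMap.id) (hφψ₂ : φ₂ ∘ₗ ψ₂ = x • LinearMap.id)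
    (f : F₁ →ₗ[S] F₂) (g : G₁ →ₗ[S] G₂)
    (hsq₁ : g ∘ₗ φ₁ = φ₂ ∘ₗ f) (hsq₂ : f ∘ₗ ψ₁ = ψ₂ ∘ₗ g)
    (hnull : ∃ (s : ℤ → ((G₁ ⧸ xSub x G₁) →ₗ[S] (F₂ ⧸ xSub x F₂)))
        (t : ℤ → ((F₁ ⧸ xSub x F₁) →ₗ[S] (G₂ ⧸ xSub x G₂))),
      ∀ n : ℤ,
        redMap x f = s n ∘ₗ redMap x φ₁ + redMap x ψ₂ ∘ₗ t n ∧
        redMap x g = t n ∘ₗ redMap x ψ₁ + redMap x φ₂ ∘ₗ s (n + 1)) :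
    ∃ (σ : G₁ →ₗ[S] F₂) (τ : F₁ →ₗ[S] G₂),
      f = σ ∘ₗ φ₁ + ψ₂ ∘ₗ τ ∧ g = τ ∘ₗ ψ₁ + φ₂ ∘ₗ σ := by
  obtain ⟨s, t, hst⟩ := hnull
  obtain ⟨h1, -⟩ := hst 0
  -- lift the homotopy maps along the quotient projections
  obtain ⟨σ₀, hσ₀⟩ := Module.projective_lifting_property (xSub x F₂).mkQ
    ((s 0) ∘ₗ (xSub x G₁).mkQ) (Submodule.mkQ_surjective _)
  obtain ⟨τ₀, hτ₀⟩ := Module.projective_lifting_property (xSub x G₂).mkQ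
    ((t 0) ∘ₗ (xSub x F₁).mkQ) (Submodule.mkQ_surjective _)
  -- the defect `f - σ₀φ₁ - ψ₂τ₀` takes values in `xF₂`
  have hd : ∀ a : F₁, ∃ m : F₂, x • m = f a - σ₀ (φ₁ a) - ψ₂ (τ₀ a) := by
    intro a
    rw [← mem_xSub_iff, ← Submodule.Quotient.mk_eq_zero]
    have e1 := LinearMap.congr_fun h1 ((xSub x F₁).mkQ a)
    have e2 := LinearMap.congr_fun hσ₀ (φ₁ a)
    have e3 := LinearMap.congr_fun hτ₀ a
    simp only [LinearMap.add_apply, LinearMap.comp_apply, Submodule.mkQ_apply,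
      redMap, Submodule.mapQ_apply] at e1 e2 e3
    rw [← e3] at e1
    simp only [redMap, Submodule.mapQ_apply] at e1
    have : (Submodule.Quotient.mk (f a - σ₀ (φ₁ a) - ψ₂ (τ₀ a)) : F₂ ⧸ xSub x F₂)
        = Submodule.Quotient.mk (f a) - Submodule.Quotient.mk (σ₀ (φ₁ a))
          - Submodule.Quotient.mk (ψ₂ (τ₀ a)) := by
      rw [Submodule.Quotient.mk_sub, Submodule.Quotient.mk_sub]
    rw [this, e1, e2]
    abel
  choose αf hαf using hd
  have cancelF₂ : ∀ {m m' : F₂}, x • m = x • m' → m = m' := fun h => smul_cancel_of_free hx h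
  let α : F₁ →ₗ[S] F₂ :=
    { toFun := αf
      map_add' := fun a b => cancelF₂ (by
        rw [hαf, smul_add, hαf, hαf]
        simp only [map_add]
        abel)
      map_smul' := fun r a => cancelF₂ (by
        rw [RingHom.id_apply, hαf, smul_comm, hαf]
        simp only [map_smul, smul_sub]) }
  have hα : ∀ a : F₁, x • α a = f a - σ₀ (φ₁ a) - ψ₂ (τ₀ a) := hαf
  have hψφ₁' : ∀ a : F₁, ψ₁ (φ₁ a) = x • a := fun a => by
    simpa using LinearMap.congr_fun hψφ₁ a
  have hφψ₁' : ∀ y : G₁, φ₁ (ψ₁ y) = x • y := fun y => by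
    simpa using LinearMap.congr_fun hφψ₁ y
  have hφψ₂' : ∀ z : G₂, φ₂ (ψ₂ z) = x • z := fun z => by
    simpa using LinearMap.congr_fun hφψ₂ z
  have hsq₁' : ∀ a : F₁, g (φ₁ a) = φ₂ (f a) := fun a => LinearMap.congr_fun hsq₁ a
  refine ⟨σ₀ + α ∘ₗ ψ₁, τ₀, ?_, ?_⟩
  · ext a
    simp only [LinearMap.add_apply, LinearMap.comp_apply]
    rw [hψφ₁', map_smul, hα]
    abel
  · ext y
    simp only [LinearMap.add_apply, LinearMap.comp_apply]
    apply smul_cancel_of_free hx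
    have step1 : x • g y = φ₂ (f (ψ₁ y)) := by
      rw [← hsq₁', hφψ₁', map_smul]
    have step2 : f (ψ₁ y) = σ₀ (φ₁ (ψ₁ y)) + ψ₂ (τ₀ (ψ₁ y)) + x • α (ψ₁ y) := by
      rw [hα]; abel
    rw [step1, step2, map_add, map_add, hφψ₁', map_smul, hφψ₂']
    simp only [map_add, map_smul, smul_add]
    abel
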